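/- For all natural numbers n ≥ 0, the type D Bell numbers satisfy the recurrence D(n+1) = Σ_{i=1}^{n} C(n,i) · Σ_{k=0}^{n-i} 2^(n-i-k) · S(n-i,k) + Σ_{k=0}^{n} 2^k · C(n,k) · D(n-k), where S denotes the classical Stirling numbers of the second kind. -/
import Mathlib


/-- The classical Stirling numbers of the second kind, defined by the recurrence
`S(n,k) = S(n-1,k-1) + k·S(n-1,k)` with `S(0,k) = δ_{0,k}`. -/
def stirling2 : ℕ → ℕ → ℕ
  | 0, 0 => 1
  | 0, _ + 1 => 0
  | _ + 1, 0 => 0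
  | n + 1, k + 1 => stirling2 n k + (k + 1) * stirling2 n (k + 1)

/-- The type `B` Stirling numbers of the second kind, defined by the recurrence
`S_B(n,k) = S_B(n-1,k-1) + (2k+1)·S_B(n-1,k)` with `S_B(0,k) = δ_{0,k}`. -/
def stirlingB : ℕ → ℕ → ℕ
  | 0, 0 => 1
  | 0, _ + 1 => 0
  | n + 1, 0 => stirlingB n 0
  | n + 1, k + 1 => stirlingB n k + (2 * (k + 1) + 1) * stirlingB n (k + 1)

/-- The type `B` Bell numbers: `B(n) = Σ_{k=0}^{n} S_B(n,k)`. -/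
def bellB (n : ℕ) : ℕ := ∑ k ∈ Finset.range (n + 1), stirlingB n k

/-- The type `D` Stirling numbers of the second kind:
`S_D(n,k) = S_B(n,k) - n·2^(n-1-k)·S(n-1,k)` for `n ≥ 1` and `0 ≤ k ≤ n-1`,
with `S_D(n,n) = 1` and `S_D(0,k) = δ_{0,k}`. -/
def stirlingD (n k : ℕ) : ℤ :=
  if n = 0 then (if k = 0 then 1 else 0)
  else if k = n then 1
  else if k ≤ n - 1 then
    (stirlingB n k : ℤ) - (n : ℤ) * 2 ^ (n - 1 - k) * (stirling2 (n - 1) k : ℤ)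
  else 0

/-- The type `D` Bell numbers: `D(n) = Σ_{k=0}^{n} S_D(n,k)`. -/
def bellD (n : ℕ) : ℤ := ∑ k ∈ Finset.range (n + 1), stirlingD n k




lemma stirling2_eq_zero : ∀ {n k : ℕ}, n < k → stirling2 n k = 0
  | 0, _ + 1, _ => rfl
  | n + 1, k + 1, h => by
      have h1 : n < k := by omega
      have h2 : n < k + 1 := by omega
      simp [stirling2, stirling2_eq_zero h1, stirling2_eq_zero h2]

lemma stirlingB_eq_zero : ∀ {n k : ℕ}, n < k → stirlingB n k = 0
  | 0, _ + 1, _ => rfl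
  | n + 1, k + 1, h => by
      have h1 : n < k := by omega
      have h2 : n < k + 1 := by omega
      simp [stirlingB, stirlingB_eq_zero h1, stirlingB_eq_zero h2]

lemma stirlingB_self : ∀ n : ℕ, stirlingB n n = 1
  | 0 => rfl
  | n + 1 => by
      simp [stirlingB, stirlingB_self n, stirlingB_eq_zero (Nat.lt_succ_self n)]

lemma stirling2_zero_right : ∀ n : ℕ, stirling2 (n + 1) 0 = 0 := fun _ => rfl

/-- classical: S(n+1, j+1) = Σ_{i=0}^n C(n,i) S(i,j) -/
lemma stirling2_succ_sum : ∀ (n j : ℕ),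
    stirling2 (n + 1) (j + 1) = ∑ i ∈ Finset.range (n + 1), n.choose i * stirling2 i j
  | 0, j => by simp [stirling2, stirling2_eq_zero (Nat.zero_lt_succ j)]
  | n + 1, j => by
      rw [Finset.sum_range_succ' (fun i => (n+1).choose i * stirling2 i j)]
      have pascal : ∀ i, (n+1).choose (i+1) = n.choose i + n.choose (i+1) :=
        fun i => Nat.choose_succ_succ n i
      simp only [pascal, Nat.add_mul]
      rw [Finset.sum_add_distrib]
      have h2 : ∑ i ∈ Finset.range (n + 1), n.choose (i+1) * stirling2 (i+1) j
            + (n+1).choose 0 * stirling2 0 j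
          = ∑ i ∈ Finset.range (n + 2), n.choose i * stirling2 i j := by
        rw [Finset.sum_range_succ' (fun i => n.choose i * stirling2 i j)]
        simp
      have h3 : ∑ i ∈ Finset.range (n + 2), n.choose i * stirling2 i j
          = ∑ i ∈ Finset.range (n + 1), n.choose i * stirling2 i j := by
        rw [Finset.sum_range_succ, Nat.choose_succ_self, Nat.zero_mul, Nat.add_zero]
      rw [Nat.add_assoc (∑ x ∈ Finset.range (n + 1), n.choose x * stirling2 (x + 1) j), h2, h3, ← stirling2_succ_sum n j]
      cases j with
      | zero =>
          have : ∀ i ∈ Finset.range (n+1), n.choose i * stirling2 (i+1) 0 = 0 := by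
            intro i _; simp [stirling2]
          rw [Finset.sum_congr rfl this]
          simp [stirling2]
      | succ j' =>
          have : ∀ i ∈ Finset.range (n+1), n.choose i * stirling2 (i+1) (j'+1)
              = n.choose i * stirling2 i j' + (j'+1) * (n.choose i * stirling2 i (j'+1)) := by
            intro i _; simp [stirling2]; ring
          rw [Finset.sum_congr rfl this, Finset.sum_add_distrib, ← Finset.mul_sum,
            ← stirling2_succ_sum n j', ← stirling2_succ_sum n (j'+1)]
          simp [stirling2]; ring

/-- weighted Stirling numbers -/
def uS (i k : ℕ) : ℕ := 2 ^ (i - k) * stirling2 i k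

lemma uS_succ_succ (i k : ℕ) : uS (i + 1) (k + 1) = uS i k + 2 * (k + 1) * uS i (k + 1) := by
  rcases le_or_gt i k with h | h
  · have h1 : stirling2 i (k + 1) = 0 := stirling2_eq_zero (by omega)
    unfold uS
    simp [stirling2, h1]
  · unfold uS
    have e1 : i + 1 - (k + 1) = i - k := by omega
    have e2 : i - k = (i - (k+1)) + 1 := by omega
    rw [e1]
    show 2 ^ (i - k) * (stirling2 i k + (k + 1) * stirling2 i (k + 1)) = _
    rw [Nat.mul_add, e2]
    ring

lemma uS_succ_zero (i : ℕ) : uS (i + 1) 0 = 0 := by simp [uS, stirling2]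

lemma stirlingB_eq_sum : ∀ (n k : ℕ),
    stirlingB n k = ∑ i ∈ Finset.range (n + 1), n.choose i * uS i k
  | 0, k => by cases k <;> simp [stirlingB, uS, stirling2]
  | n + 1, k => by
      rw [Finset.sum_range_succ' (fun i => (n+1).choose i * uS i k)]
      have pascal : ∀ i, (n+1).choose (i+1) = n.choose i + n.choose (i+1) :=
        fun i => Nat.choose_succ_succ n i
      simp only [pascal, Nat.add_mul]
      rw [Finset.sum_add_distrib]
      have h2 : ∑ i ∈ Finset.range (n + 1), n.choose (i+1) * uS (i+1) k
            + (n+1).choose 0 * uS 0 k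
          = ∑ i ∈ Finset.range (n + 2), n.choose i * uS i k := by
        rw [Finset.sum_range_succ' (fun i => n.choose i * uS i k)]
        simp
      have h3 : ∑ i ∈ Finset.range (n + 2), n.choose i * uS i k
          = ∑ i ∈ Finset.range (n + 1), n.choose i * uS i k := by
        rw [Finset.sum_range_succ, Nat.choose_succ_self, Nat.zero_mul, Nat.add_zero]
      rw [Nat.add_assoc (∑ x ∈ Finset.range (n + 1), n.choose x * uS (x + 1) k), h2, h3,
        ← stirlingB_eq_sum n k]
      cases k with
      | zero =>
          have : ∀ i ∈ Finset.range (n+1), n.choose i * uS (i+1) 0 = 0 := by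
            intro i _; simp [uS_succ_zero]
          rw [Finset.sum_congr rfl this]
          simp [stirlingB]
      | succ k' =>
          have : ∀ i ∈ Finset.range (n+1), n.choose i * uS (i+1) (k'+1)
              = n.choose i * uS i k' + 2 * (k'+1) * (n.choose i * uS i (k'+1)) := by
            intro i _; rw [uS_succ_succ]; ring
          rw [Finset.sum_congr rfl this, Finset.sum_add_distrib, ← Finset.mul_sum,
            ← stirlingB_eq_sum n k', ← stirlingB_eq_sum n (k'+1)]
          show stirlingB n k' + (2*(k'+1)+1) * stirlingB n (k'+1) = _
          ring

def Tn (n : ℕ) : ℕ := ∑ k ∈ Finset.range (n + 1), uS n k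

lemma uS_eq_zero {i k : ℕ} (h : i < k) : uS i k = 0 := by
  simp [uS, stirling2_eq_zero h]

lemma sum_uS_ext {i n : ℕ} (h : i ≤ n) :
    ∑ k ∈ Finset.range (n + 1), uS i k = Tn i := by
  rw [Tn]
  symm
  apply Finset.sum_subset
  · intro x hx
    simp only [Finset.mem_range] at *
    omega
  · intro x _ hx
    simp only [Finset.mem_range] at hx
    exact uS_eq_zero (by omega)


/-- F2 -/
lemma bellB_eq_sum (n : ℕ) : bellB n = ∑ i ∈ Finset.range (n + 1), n.choose i * Tn i := by
  rw [bellB]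
  have : ∀ k ∈ Finset.range (n+1), stirlingB n k
      = ∑ i ∈ Finset.range (n + 1), n.choose i * uS i k := by
    intro k _; exact stirlingB_eq_sum n k
  rw [Finset.sum_congr rfl this, Finset.sum_comm]
  refine Finset.sum_congr rfl fun i hi => ?_
  rw [← Finset.mul_sum, sum_uS_ext (Nat.lt_succ_iff.mp (Finset.mem_range.mp hi))]

/-- F1 -/
lemma Tn_succ (n : ℕ) :
    Tn (n + 1) = ∑ i ∈ Finset.range (n + 1), n.choose i * (2 ^ (n - i) * Tn i) := by
  rw [Tn, Finset.sum_range_succ' (fun k => uS (n+1) k), uS_succ_zero, Nat.add_zero]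
  have step : ∀ k ∈ Finset.range (n+1), uS (n + 1) (k + 1)
      = ∑ i ∈ Finset.range (n + 1), n.choose i * (2 ^ (n - k) * stirling2 i k) := by
    intro k _
    rw [uS, Nat.succ_sub_succ, stirling2_succ_sum, Finset.mul_sum]
    refine Finset.sum_congr rfl fun i _ => ?_
    ring
  rw [Finset.sum_congr rfl step, Finset.sum_comm]
  refine Finset.sum_congr rfl fun i hi => ?_
  rw [← Finset.mul_sum]
  congr 1
  have hin : i ≤ n := Nat.lt_succ_iff.mp (Finset.mem_range.mp hi)
  rw [← sum_uS_ext hin, Finset.mul_sum]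
  refine Finset.sum_congr rfl fun k hk => ?_
  rcases le_or_gt k i with h | h
  · rw [uS]
    have : n - k = (n - i) + (i - k) := by omega
    rw [this, pow_add]
    ring
  · rw [uS_eq_zero h, stirling2_eq_zero h]
    simp

open Nat in
lemma trinom (a b c : ℕ) :
    (a + b + c).choose a * (b + c).choose b = (a + b + c).choose b * (a + c).choose a := by
  have key : ∀ x y z : ℕ,
      (x + y + z).choose x * (y + z).choose y * (x ! * (y ! * z !)) = (x + y + z)! := by
    intro x y z
    have h1 : (x + y + z).choose x * x ! * (y + z)! = (x + y + z)! := by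
      have := Nat.choose_mul_factorial_mul_factorial (Nat.le_add_right x (y + z))
      rwa [Nat.add_sub_cancel_left, ← Nat.add_assoc] at this
    have h2 : (y + z).choose y * y ! * z ! = (y + z)! := by
      have := Nat.choose_mul_factorial_mul_factorial (Nat.le_add_right y z)
      rwa [Nat.add_sub_cancel_left] at this
    calc (x + y + z).choose x * (y + z).choose y * (x ! * (y ! * z !))
        = ((y + z).choose y * y ! * z !) * ((x + y + z).choose x * x !) := by ring
      _ = (y + z)! * ((x + y + z).choose x * x !) := by rw [h2]
      _ = (x + y + z).choose x * x ! * (y + z)! := by ring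
      _ = (x + y + z)! := h1
  apply Nat.eq_of_mul_eq_mul_right (show 0 < a ! * (b ! * c !) by positivity)
  rw [key a b c]
  symm
  have h2 := key b a c
  rw [show b + a + c = a + b + c by ring] at h2
  calc (a + b + c).choose b * (a + c).choose a * (a ! * (b ! * c !))
      = (a + b + c).choose b * (a + c).choose a * (b ! * (a ! * c !)) := by ring
    _ = (a + b + c)! := h2

/-- trinomial revision, form 1: `C(n,j+d)·C(j+d,j) = C(n,j)·C(n-j,d)` for `j+d ≤ n` -/
lemma trinom1 {n j d : ℕ} (h : j + d ≤ n) :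
    n.choose (j + d) * (j + d).choose j = n.choose j * (n - j).choose d := by
  set e := n - j - d with he
  have hn : n = e + j + d := by omega
  have h1 := trinom e j d
  rw [← hn] at h1
  have h2 : n.choose e = n.choose (j + d) := by
    rw [← Nat.choose_symm (by omega : j + d ≤ n)]
    congr 1
    omega
  have h3 : (e + d).choose e = (n - j).choose d := by
    rw [Nat.choose_symm_add]
    congr 1
    omega
  rw [h2, h3] at h1
  exact h1

/-- trinomial revision, form 2: `C(n,k)·C(n-k,j) = C(n,j)·C(n-j,k)` for `k+j ≤ n` -/
lemma trinom2 {n k j : ℕ} (h : k + j ≤ n) :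
    n.choose k * (n - k).choose j = n.choose j * (n - j).choose k := by
  set e := n - k - j with he
  have hn : n = k + j + e := by omega
  have h1 := trinom k j e
  rw [← hn] at h1
  have h2 : (j + e) = n - k := by omega
  have h3 : (k + e) = n - j := by omega
  rw [h2, h3] at h1
  exact h1

lemma sum_choose_two_pow (m : ℕ) :
    ∑ k ∈ Finset.range (m + 1), 2 ^ k * m.choose k = 3 ^ m := by
  have := add_pow (2 : ℕ) 1 m
  simp only [one_pow, mul_one] at this
  rw [show (3:ℕ) = 2 + 1 by rfl, this]
  simp [Nat.cast_id]

/-- inner sum, left form -/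
lemma inner_left {n j : ℕ} (hj : j ≤ n) :
    ∑ i ∈ Finset.range (n + 1), n.choose i * i.choose j * 2 ^ (i - j)
      = n.choose j * 3 ^ (n - j) := by
  have split : ∑ i ∈ Finset.range (n + 1), n.choose i * i.choose j * 2 ^ (i - j)
      = ∑ i ∈ Finset.Ico j (n + 1), n.choose i * i.choose j * 2 ^ (i - j) := by
    rw [Finset.range_eq_Ico]
    rw [← Finset.sum_Ico_consecutive _ (Nat.zero_le j) (by omega : j ≤ n + 1)]
    have : ∑ i ∈ Finset.Ico 0 j, n.choose i * i.choose j * 2 ^ (i - j) = 0 := by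
      apply Finset.sum_eq_zero
      intro i hi
      rw [Finset.mem_Ico] at hi
      rw [Nat.choose_eq_zero_of_lt hi.2]
      ring
    rw [this, Nat.zero_add]
  rw [split, Finset.sum_Ico_eq_sum_range]
  have hrange : n + 1 - j = (n - j) + 1 := by omega
  rw [hrange]
  have step : ∀ d ∈ Finset.range ((n - j) + 1),
      n.choose (j + d) * (j + d).choose j * 2 ^ (j + d - j)
        = n.choose j * (2 ^ d * (n - j).choose d) := by
    intro d hd
    rw [Finset.mem_range] at hd
    rw [trinom1 (by omega : j + d ≤ n), Nat.add_sub_cancel_left]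
    ring
  rw [Finset.sum_congr rfl step, ← Finset.mul_sum, sum_choose_two_pow]

/-- inner sum, right form -/
lemma inner_right {n j : ℕ} (hj : j ≤ n) :
    ∑ k ∈ Finset.range (n + 1), 2 ^ k * n.choose k * (n - k).choose j
      = n.choose j * 3 ^ (n - j) := by
  have split : ∑ k ∈ Finset.range (n + 1), 2 ^ k * n.choose k * (n - k).choose j
      = ∑ k ∈ Finset.range ((n - j) + 1), 2 ^ k * n.choose k * (n - k).choose j := by
    symm
    apply Finset.sum_subset
    · intro x hx
      simp only [Finset.mem_range] at *
      omega
    · intro x hmem hx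
      simp only [Finset.mem_range] at hmem hx
      rw [Nat.choose_eq_zero_of_lt (by omega : n - x < j)]
      ring
  rw [split]
  have step : ∀ k ∈ Finset.range ((n - j) + 1),
      2 ^ k * n.choose k * (n - k).choose j
        = n.choose j * (2 ^ k * (n - j).choose k) := by
    intro k hk
    rw [Finset.mem_range] at hk
    have := trinom2 (by omega : k + j ≤ n)
    calc 2 ^ k * n.choose k * (n - k).choose j
        = 2 ^ k * (n.choose k * (n - k).choose j) := by ring
      _ = 2 ^ k * (n.choose j * (n - j).choose k) := by rw [this]
      _ = n.choose j * (2 ^ k * (n - j).choose k) := by ring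
  rw [Finset.sum_congr rfl step, ← Finset.mul_sum, sum_choose_two_pow]

/-- I1 left auxiliary: Σ C(n,i)·T(i+1) = Σ C(n,j)·3^(n-j)·T(j). -/
lemma left_aux (n : ℕ) :
    ∑ i ∈ Finset.range (n + 1), n.choose i * Tn (i + 1)
      = ∑ j ∈ Finset.range (n + 1), n.choose j * 3 ^ (n - j) * Tn j := by
  have e1 : ∀ i ∈ Finset.range (n + 1), n.choose i * Tn (i + 1)
      = ∑ j ∈ Finset.range (n + 1), n.choose i * i.choose j * 2 ^ (i - j) * Tn j := by
    intro i hi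
    rw [Finset.mem_range] at hi
    rw [Tn_succ, Finset.mul_sum]
    have ext : ∑ j ∈ Finset.range (i + 1), n.choose i * (i.choose j * (2 ^ (i - j) * Tn j))
        = ∑ j ∈ Finset.range (n + 1), n.choose i * (i.choose j * (2 ^ (i - j) * Tn j)) := by
      apply Finset.sum_subset
      · intro x hx
        simp only [Finset.mem_range] at *
        omega
      · intro x _ hx
        simp only [Finset.mem_range] at hx
        rw [Nat.choose_eq_zero_of_lt (by omega : i < x)]
        ring
    rw [ext]
    refine Finset.sum_congr rfl fun j _ => ?_
    ring
  rw [Finset.sum_congr rfl e1, Finset.sum_comm]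
  refine Finset.sum_congr rfl fun j hj => ?_
  rw [Finset.mem_range] at hj
  rw [show ∑ i ∈ Finset.range (n + 1), n.choose i * i.choose j * 2 ^ (i - j) * Tn j
      = (∑ i ∈ Finset.range (n + 1), n.choose i * i.choose j * 2 ^ (i - j)) * Tn j from
    (Finset.sum_mul _ _ _).symm, inner_left (by omega : j ≤ n)]

/-- I1 right auxiliary -/
lemma right_aux (n : ℕ) :
    ∑ k ∈ Finset.range (n + 1), 2 ^ k * n.choose k * bellB (n - k)
      = ∑ j ∈ Finset.range (n + 1), n.choose j * 3 ^ (n - j) * Tn j := by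
  have e1 : ∀ k ∈ Finset.range (n + 1), 2 ^ k * n.choose k * bellB (n - k)
      = ∑ j ∈ Finset.range (n + 1), 2 ^ k * n.choose k * (n - k).choose j * Tn j := by
    intro k hk
    rw [Finset.mem_range] at hk
    rw [bellB_eq_sum, Finset.mul_sum]
    have ext : ∑ j ∈ Finset.range (n - k + 1), 2 ^ k * n.choose k * ((n - k).choose j * Tn j)
        = ∑ j ∈ Finset.range (n + 1), 2 ^ k * n.choose k * ((n - k).choose j * Tn j) := by
      apply Finset.sum_subset
      · intro x hx
        simp only [Finset.mem_range] at *
        omega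
      · intro x _ hx
        simp only [Finset.mem_range] at hx
        rw [Nat.choose_eq_zero_of_lt (by omega : n - k < x)]
        ring
    rw [ext]
    refine Finset.sum_congr rfl fun j _ => ?_
    ring
  rw [Finset.sum_congr rfl e1, Finset.sum_comm]
  refine Finset.sum_congr rfl fun j hj => ?_
  rw [Finset.mem_range] at hj
  rw [show ∑ k ∈ Finset.range (n + 1), 2 ^ k * n.choose k * (n - k).choose j * Tn j
      = (∑ k ∈ Finset.range (n + 1), 2 ^ k * n.choose k * (n - k).choose j) * Tn j from
    (Finset.sum_mul _ _ _).symm, inner_right (by omega : j ≤ n)]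

/-- I1 -/
lemma bellB_succ (n : ℕ) :
    bellB (n + 1) = bellB n + ∑ k ∈ Finset.range (n + 1), 2 ^ k * n.choose k * bellB (n - k) := by
  rw [right_aux, ← left_aux]
  rw [bellB_eq_sum (n + 1), Finset.sum_range_succ' (fun i => (n+1).choose i * Tn i)]
  have pascal : ∀ i, (n+1).choose (i+1) = n.choose i + n.choose (i+1) :=
    fun i => Nat.choose_succ_succ n i
  simp only [pascal, Nat.add_mul]
  rw [Finset.sum_add_distrib]
  have h2 : ∑ i ∈ Finset.range (n + 1), n.choose (i+1) * Tn (i+1) + (n+1).choose 0 * Tn 0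
      = ∑ i ∈ Finset.range (n + 2), n.choose i * Tn i := by
    rw [Finset.sum_range_succ' (fun i => n.choose i * Tn i)]
    simp
  have h3 : ∑ i ∈ Finset.range (n + 2), n.choose i * Tn i
      = ∑ i ∈ Finset.range (n + 1), n.choose i * Tn i := by
    rw [Finset.sum_range_succ, Nat.choose_succ_self, Nat.zero_mul, Nat.add_zero]
  rw [Nat.add_assoc (∑ x ∈ Finset.range (n + 1), n.choose x * Tn (x + 1)), h2, h3,
    ← bellB_eq_sum n]
  ring

/-- I2 -/
lemma bellB_eq_Tn_add (n : ℕ) :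
    bellB n = Tn n + ∑ i ∈ Finset.Icc 1 n, n.choose i * Tn (n - i) := by
  rw [bellB_eq_sum]
  have refl : ∑ i ∈ Finset.range (n + 1), n.choose i * Tn i
      = ∑ i ∈ Finset.range (n + 1), n.choose (n - i) * Tn (n - i) := by
    exact (Finset.sum_range_reflect (fun i => n.choose i * Tn i) (n + 1)).symm
  rw [refl]
  have symm : ∀ i ∈ Finset.range (n + 1), n.choose (n - i) * Tn (n - i)
      = n.choose i * Tn (n - i) := by
    intro i hi
    rw [Finset.mem_range] at hi
    rw [Nat.choose_symm (by omega : i ≤ n)]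
  rw [Finset.sum_congr rfl symm,
    Finset.sum_range_succ' (fun i => n.choose i * Tn (n - i))]
  have hIcc : ∑ i ∈ Finset.Icc 1 n, n.choose i * Tn (n - i)
      = ∑ d ∈ Finset.range n, n.choose (d + 1) * Tn (n - (d + 1)) := by
    rw [← Finset.Ico_add_one_right_eq_Icc, Finset.sum_Ico_eq_sum_range]
    refine Finset.sum_congr (by norm_num) fun d _ => ?_
    rw [Nat.add_comm 1 d]
  rw [hIcc]
  simp [Nat.add_comm]

/-- I3 -/
lemma Tn_mul : ∀ n : ℕ, n * Tn n
    = ∑ k ∈ Finset.range (n + 1), 2 ^ k * n.choose k * ((n - k) * Tn (n - k - 1))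
  | 0 => by simp
  | m + 1 => by
      rw [Finset.sum_range_succ]
      have hlast : 2 ^ (m+1) * (m+1).choose (m+1) * ((m + 1 - (m+1)) * Tn (m + 1 - (m+1) - 1))
          = 0 := by simp
      rw [hlast, Nat.add_zero]
      have step : ∀ k ∈ Finset.range (m + 1),
          2 ^ k * (m+1).choose k * ((m + 1 - k) * Tn (m + 1 - k - 1))
            = (m + 1) * (2 ^ k * m.choose k * Tn (m - k)) := by
        intro k hk
        rw [Finset.mem_range] at hk
        have h1 : m + 1 - k - 1 = m - k := by omega
        have h2 := Nat.choose_mul_succ_eq m k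
        calc 2 ^ k * (m+1).choose k * ((m + 1 - k) * Tn (m + 1 - k - 1))
            = ((m+1).choose k * (m + 1 - k)) * (2 ^ k * Tn (m + 1 - k - 1)) := by ring
          _ = (m.choose k * (m + 1)) * (2 ^ k * Tn (m - k)) := by rw [← h2, h1]
          _ = (m + 1) * (2 ^ k * m.choose k * Tn (m - k)) := by ring
      rw [Finset.sum_congr rfl step, ← Finset.mul_sum]
      congr 1
      have hrefl : ∑ k ∈ Finset.range (m + 1), m.choose k * (2 ^ (m - k) * Tn k)
          = ∑ k ∈ Finset.range (m + 1), m.choose (m - k) * (2 ^ (m - (m - k)) * Tn (m - k)) := by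
        exact (Finset.sum_range_reflect (fun k => m.choose k * (2 ^ (m - k) * Tn k)) (m + 1)).symm
      rw [Tn_succ, hrefl]
      refine Finset.sum_congr rfl fun k hk => ?_
      rw [Finset.mem_range] at hk
      rw [Nat.choose_symm (by omega : k ≤ m), show m - (m - k) = k by omega]
      ring



lemma Tn_cast (m : ℕ) :
    ((Tn m : ℕ) : ℤ) = ∑ k ∈ Finset.range (m + 1), 2 ^ (m - k) * (stirling2 m k : ℤ) := by
  rw [Tn]
  push_cast [uS]
  rfl

/-- F3 -/
lemma bellD_eq : ∀ m : ℕ, bellD m = (bellB m : ℤ) - m * Tn (m - 1)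
  | 0 => by
      rw [bellD, bellB]
      simp [stirlingD, stirlingB]
  | m + 1 => by
      rw [bellD, Finset.sum_range_succ]
      have hdiag : stirlingD (m + 1) (m + 1) = 1 := by
        rw [stirlingD]
        simp
      have hterm : ∀ k ∈ Finset.range (m + 1), stirlingD (m + 1) k
          = (stirlingB (m + 1) k : ℤ) - ((m : ℤ) + 1) * (2 ^ (m - k) * (stirling2 m k : ℤ)) := by
        intro k hk
        rw [Finset.mem_range] at hk
        rw [stirlingD]
        rw [if_neg (by omega), if_neg (by omega), if_pos (by omega)]
        push_cast
        ring_nf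
      rw [hdiag, Finset.sum_congr rfl hterm, Finset.sum_sub_distrib, ← Finset.mul_sum]
      have h1 : ∑ k ∈ Finset.range (m + 1), (stirlingB (m + 1) k : ℤ)
          = (bellB (m + 1) : ℤ) - 1 := by
        rw [bellB, Finset.sum_range_succ (f := fun k => stirlingB (m + 1) k), stirlingB_self]
        push_cast
        ring
      have h2 : ∑ k ∈ Finset.range (m + 1), 2 ^ (m - k) * (stirling2 m k : ℤ)
          = ((Tn m : ℕ) : ℤ) := (Tn_cast m).symm
      rw [h1, h2]
      have h3 : (m + 1 : ℕ) - 1 = m := by omega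
      rw [h3]
      push_cast
      ring


/-- `D(n+1) = Σ_{i=1}^{n} C(n,i)·Σ_{k=0}^{n-i} 2^(n-i-k)·S(n-i,k) + Σ_{k=0}^{n} 2^k·C(n,k)·D(n-k)`. -/
theorem bellD_succ (n : ℕ) :
    bellD (n + 1)
      = (∑ i ∈ Finset.Icc 1 n, (Nat.choose n i : ℤ) *
          ∑ k ∈ Finset.range (n - i + 1), 2 ^ (n - i - k) * (stirling2 (n - i) k : ℤ))
        + ∑ k ∈ Finset.range (n + 1), 2 ^ k * (Nat.choose n k : ℤ) * bellD (n - k) := by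
  have hA : (∑ i ∈ Finset.Icc 1 n, (Nat.choose n i : ℤ) *
          ∑ k ∈ Finset.range (n - i + 1), 2 ^ (n - i - k) * (stirling2 (n - i) k : ℤ))
      = ((∑ i ∈ Finset.Icc 1 n, n.choose i * Tn (n - i) : ℕ) : ℤ) := by
    push_cast
    refine Finset.sum_congr rfl fun i _ => ?_
    rw [← Tn_cast]
  have hB : (∑ k ∈ Finset.range (n + 1), 2 ^ k * (Nat.choose n k : ℤ) * bellD (n - k))
      = ((∑ k ∈ Finset.range (n + 1), 2 ^ k * n.choose k * bellB (n - k) : ℕ) : ℤ)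
        - ((∑ k ∈ Finset.range (n + 1),
            2 ^ k * n.choose k * ((n - k) * Tn (n - k - 1)) : ℕ) : ℤ) := by
    push_cast
    rw [← Finset.sum_sub_distrib]
    refine Finset.sum_congr rfl fun k _ => ?_
    rw [bellD_eq (n - k)]
    ring
  have hL : bellD (n + 1) = (bellB (n + 1) : ℤ) - ((n : ℤ) + 1) * Tn n := by
    rw [bellD_eq (n + 1)]
    norm_num
  rw [hL, hA, hB]
  have c1 : ((bellB (n + 1) : ℕ) : ℤ)
      = (bellB n : ℤ)
        + ((∑ k ∈ Finset.range (n + 1), 2 ^ k * n.choose k * bellB (n - k) : ℕ) : ℤ) := by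
    exact_mod_cast congrArg (fun x : ℕ => (x : ℤ)) (bellB_succ n)
  have c2 : ((bellB n : ℕ) : ℤ)
      = (Tn n : ℤ) + ((∑ i ∈ Finset.Icc 1 n, n.choose i * Tn (n - i) : ℕ) : ℤ) := by
    exact_mod_cast congrArg (fun x : ℕ => (x : ℤ)) (bellB_eq_Tn_add n)
  have c3 : (n : ℤ) * (Tn n : ℤ)
      = ((∑ k ∈ Finset.range (n + 1), 2 ^ k * n.choose k * ((n - k) * Tn (n - k - 1)) : ℕ) : ℤ) := by
    exact_mod_cast congrArg (fun x : ℕ => (x : ℤ)) (Tn_mul n)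
  linear_combination c1 + c2 - c3
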